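/- arXiv:2501.08750 — 4 statements merged into one kernel-verified Lean document; each statement's English description precedes it below -/
import Mathlib

section
/- Let f : ℤ² → ℤ² be a group homomorphism with f ∘ f = id. Then either f is diagonalizable over ℤ (i.e., there is a basis of ℤ² consisting of eigenvectors of f with eigenvalues ±1), or f is conjugate over ℤ to the map swapping the two coordinates. -/
/-!
Unless `f = -1`, some `v + f v` is a nonzero fixed vector; dividing it by the gcd of its
coordinates gives a primitive fixed vector `u`, which extends to a basis `(u, w)` of `ℤ²`.
Writing `f w = α u + β w`, the relation `f ∘ f = 1` forces `β = ±1` and `α (1 + β) = 0`.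
If `β = -1`, replacing `w` by `w - m u` changes `α` by `-2m`, so only the parity of `α`
matters: `α` even gives the eigenbasis `(u, w - m u)`, `α` odd the swapped pair
`(w - m u, u - (w - m u))`.
-/

open Module

theorem Module.Basis.exists_fin_two_of_isUnit_det {R M : Type*} [CommRing R] [AddCommGroup M]
    [Module R M] (b : Basis (Fin 2) R M) {p q r s : R} (h : IsUnit (p * s - q * r)) :
    ∃ B : Basis (Fin 2) R M, B 0 = p • b 0 + q • b 1 ∧ B 1 = r • b 0 + s • b 1 := by
  have hv : IsUnit (b.det ![p • b 0 + q • b 1, r • b 0 + s • b 1]) := by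
    simpa [b.det_apply, Matrix.det_fin_two, Basis.toMatrix_apply, mul_comm] using h
  obtain ⟨hli, hspan⟩ := b.is_basis_iff_det.mpr hv
  exact ⟨Basis.mk hli hspan.ge, by simp, by simp⟩

theorem exists_basis_fin_two_eq_smul_apply_zero (y : Fin 2 → ℤ) (hy : y ≠ 0) :
    ∃ (b : Basis (Fin 2) ℤ (Fin 2 → ℤ)) (n : ℤ), n ≠ 0 ∧ y = n • b 0 := by
  have hg : 0 < Int.gcd (y 0) (y 1) := by
    rw [Int.gcd_pos_iff]
    by_contra! h
    exact hy (funext fun i => by fin_cases i <;> simp [h])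
  obtain ⟨g, u₀, u₁, hg0, hu, hy0, hy1⟩ := Int.exists_gcd_one' hg
  obtain ⟨p, q, hpq⟩ := Int.isCoprime_iff_gcd_eq_one.mpr hu
  have hdet : u₀ * p - u₁ * -q = 1 := by linarith
  obtain ⟨B, hB0, -⟩ :=
    (Pi.basisFun ℤ (Fin 2)).exists_fin_two_of_isUnit_det (hdet ▸ isUnit_one)
  refine ⟨B, g, by exact_mod_cast hg0.ne', funext fun i => ?_⟩
  fin_cases i <;> simp [hB0, hy0, hy1, mul_comm]

namespace LinearMap

section CommRing

variable {R M : Type*} [CommRing R] [AddCommGroup M] [Module R M] {f : M →ₗ[R] M}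

theorem exists_apply_eq_self_ne_zero_of_comp_self (hf : f ∘ₗ f = id) (hneg : f ≠ -id) :
    ∃ v, v ≠ 0 ∧ f v = v := by
  obtain ⟨v, hv⟩ : ∃ v, f v ≠ -v := by
    by_contra! h
    exact hneg (ext h)
  refine ⟨v + f v, fun h => hv (eq_neg_of_add_eq_zero_right h), ?_⟩
  rw [map_add, ← comp_apply, hf, id_apply, add_comm]

theorem exists_apply_basis_one_of_comp_self (b : Basis (Fin 2) R M) (hf : f ∘ₗ f = id)
    (h0 : f (b 0) = b 0) :
    ∃ α β : R, f (b 1) = α • b 0 + β • b 1 ∧ α * (1 + β) = 0 ∧ β * β = 1 := by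
  set α := b.repr (f (b 1)) 0
  set β := b.repr (f (b 1)) 1
  have h1 : f (b 1) = α • b 0 + β • b 1 := by
    have := b.sum_repr (f (b 1))
    rw [Fin.sum_univ_two] at this
    exact this.symm
  have hff : b 1 = (α * (1 + β)) • b 0 + (β * β) • b 1 := by
    have := LinearMap.congr_fun hf (b 1)
    rw [comp_apply, id_apply, h1, map_add, map_smul, map_smul, h0, h1] at this
    linear_combination (norm := module) -this
  refine ⟨α, β, h1, ?_, ?_⟩
  · simpa using (congrArg (b.repr · 0) hff).symm
  · simpa using (congrArg (b.repr · 1) hff).symm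

end CommRing

theorem diagonalizable_or_swap_of_comp_self_of_apply_basis_zero {M : Type*} [AddCommGroup M]
    {f : M →ₗ[ℤ] M} (b : Basis (Fin 2) ℤ M) (hf : f ∘ₗ f = id) (h0 : f (b 0) = b 0) :
    (∃ (b : Basis (Fin 2) ℤ M) (ε : Fin 2 → ℤ),
        (∀ i, ε i = 1 ∨ ε i = -1) ∧ ∀ i, f (b i) = ε i • b i) ∨
    (∃ b : Basis (Fin 2) ℤ M, f (b 0) = b 1 ∧ f (b 1) = b 0) := by
  obtain ⟨α, β, h1, hα, hβ⟩ := exists_apply_basis_one_of_comp_self b hf h0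
  rcases Int.eq_one_or_neg_one_of_mul_eq_one hβ with rfl | rfl
  · obtain rfl : α = 0 := by linarith
    refine .inl ⟨b, fun _ => 1, fun _ => .inl rfl, fun i => ?_⟩
    fin_cases i <;> simp [h0, h1]
  obtain ⟨m, rfl | rfl⟩ := Int.even_or_odd' α
  · obtain ⟨B, hB0, hB1⟩ :=
      b.exists_fin_two_of_isUnit_det (p := 1) (q := 0) (r := -m) (s := 1) (by simp)
    refine .inl ⟨B, ![1, -1], by decide, fun i => ?_⟩
    fin_cases i
    · simp [hB0, h0]
    · simp [hB1, h0, h1]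
      module
  · obtain ⟨B, hB0, hB1⟩ :=
      b.exists_fin_two_of_isUnit_det (p := -m) (q := 1) (r := 1 + m) (s := -1) (by simp)
    refine .inr ⟨B, ?_, ?_⟩ <;>
    · simp [hB0, hB1, h0, h1]
      module

end LinearMap

/-- An involution of `ℤ²` is either diagonalizable over `ℤ` (there is a basis of
eigenvectors with eigenvalues `±1`) or conjugate over `ℤ` to the coordinate swap. -/
theorem involution_of_Zsq_diagonalizable_or_swap
    (f : (Fin 2 → ℤ) →ₗ[ℤ] (Fin 2 → ℤ)) (hf : f ∘ₗ f = LinearMap.id) :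
    (∃ (b : Module.Basis (Fin 2) ℤ (Fin 2 → ℤ)) (ε : Fin 2 → ℤ),
        (∀ i, ε i = 1 ∨ ε i = -1) ∧ ∀ i, f (b i) = ε i • b i) ∨
    (∃ b : Module.Basis (Fin 2) ℤ (Fin 2 → ℤ), f (b 0) = b 1 ∧ f (b 1) = b 0) := by
  by_cases hneg : f = -LinearMap.id
  · refine .inl ⟨Pi.basisFun ℤ (Fin 2), fun _ => -1, fun _ => .inr rfl, fun i => ?_⟩
    simp [hneg]
  obtain ⟨y, hy, hfy⟩ := LinearMap.exists_apply_eq_self_ne_zero_of_comp_self hf hneg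
  obtain ⟨b, n, hn, rfl⟩ := exists_basis_fin_two_eq_smul_apply_zero y hy
  have h0 : f (b 0) = b 0 := smul_right_injective _ hn ((map_smul f n (b 0)).symm.trans hfy)
  exact LinearMap.diagonalizable_or_swap_of_comp_self_of_apply_basis_zero b hf h0
end

section
/- Let Λ be a field and R̄ = (Λ[U, U⁻¹])^m for some m ≥ 0. Suppose there is a 3-periodic exact sequence of Λ[U,U⁻¹]-modules R̄ →^{f₁} R̄ ⊕ R̄ →^{f₂} R̄ →^{f₃} R̄ →^{f₁} ⋯ (exact at every spot). Then f₁ is injective, f₂ is surjective, and f₃ = 0. -/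
set_option synthInstance.maxHeartbeats 1000000
set_option maxHeartbeats 2000000

/-- In a 3-periodic exact sequence of free `Λ[U,U⁻¹]`-modules
`R̄ → R̄ ⊕ R̄ → R̄ → R̄ → ⋯` (with `Λ` a field and `R̄` of rank `m`), the first map
is injective, the second surjective, and the third zero. -/
theorem periodic_exact_sequence_over_field
    (Λ : Type*) [Field Λ] (m : ℕ)
    (f₁ : (Fin m → LaurentPolynomial Λ) →ₗ[LaurentPolynomial Λ]
          (Fin m → LaurentPolynomial Λ) × (Fin m → LaurentPolynomial Λ))
    (f₂ : (Fin m → LaurentPolynomial Λ) × (Fin m → LaurentPolynomial Λ)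
          →ₗ[LaurentPolynomial Λ] (Fin m → LaurentPolynomial Λ))
    (f₃ : (Fin m → LaurentPolynomial Λ) →ₗ[LaurentPolynomial Λ]
          (Fin m → LaurentPolynomial Λ))
    (h12 : Function.Exact f₁ f₂)
    (h23 : Function.Exact f₂ f₃)
    (h31 : Function.Exact f₃ f₁) :
    Function.Injective f₁ ∧ Function.Surjective f₂ ∧ f₃ = 0 := by
  classical
  set R := LaurentPolynomial Λ
  haveI : IsDomain R := NoZeroDivisors.to_isDomain R
  haveI : NoZeroSMulDivisors R (Fin m → R) := inferInstance
  rw [LinearMap.exact_iff] at h12 h23 h31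
  -- ranks
  have hMrank : Module.rank R (Fin m → R) = m := rank_fin_fun m
  have hPrank : Module.rank R ((Fin m → R) × (Fin m → R)) = m + m := by
    rw [rank_prod', hMrank]
  have h1 := LinearMap.rank_range_add_rank_ker f₁
  have h2 := LinearMap.rank_range_add_rank_ker f₂
  have h3 := LinearMap.rank_range_add_rank_ker f₃
  rw [h12] at h2
  rw [h23] at h3
  rw [h31] at h1
  rw [hMrank] at h1 h3
  rw [hPrank] at h2
  -- all ranks are finite
  have ha : Module.rank R (LinearMap.range f₁) < Cardinal.aleph0 :=
    lt_of_le_of_lt (Submodule.rank_le _) (by rw [hPrank]; exact_mod_cast Cardinal.nat_lt_aleph0 (m + m))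
  have hb : Module.rank R (LinearMap.range f₂) < Cardinal.aleph0 :=
    lt_of_le_of_lt (Submodule.rank_le _) (by rw [hMrank]; exact Cardinal.nat_lt_aleph0 m)
  have hc : Module.rank R (LinearMap.range f₃) < Cardinal.aleph0 :=
    lt_of_le_of_lt (Submodule.rank_le _) (by rw [hMrank]; exact Cardinal.nat_lt_aleph0 m)
  obtain ⟨a, ha'⟩ := Cardinal.lt_aleph0.mp ha
  obtain ⟨b, hb'⟩ := Cardinal.lt_aleph0.mp hb
  obtain ⟨c, hc'⟩ := Cardinal.lt_aleph0.mp hc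
  rw [ha', hc'] at h1
  rw [hb', ha'] at h2
  rw [hc', hb'] at h3
  have e1 : a + c = m := by exact_mod_cast h1
  have e2 : b + a = m + m := by exact_mod_cast h2
  have e3 : c + b = m := by exact_mod_cast h3
  have hczero : c = 0 := by omega
  -- hence f₃ = 0
  have hf3 : f₃ = 0 := by
    rw [← LinearMap.range_eq_bot, ← Submodule.rank_eq_zero (R := R), hc', hczero]
    norm_num
  refine ⟨?_, ?_, hf3⟩
  · rw [← LinearMap.ker_eq_bot, h31, hf3, LinearMap.range_zero]
  · rw [← LinearMap.range_eq_top, ← h23, hf3, LinearMap.ker_zero]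
end

section
/- Let R̄ = (ℤ[U,U⁻¹])^m and suppose there is a 3-periodic exact sequence R̄ →^{f₁} R̄ ⊕ R̄ →^{f₂} R̄ →^{f₃} R̄ →^{f₁} ⋯ of ℤ[U,U⁻¹]-module maps. Then f₃ = 0. -/
noncomputable instance : IsDomain (LaurentPolynomial ℤ) := NoZeroDivisors.to_isDomain _

/-- In a 3-periodic exact sequence of free `ℤ[U,U⁻¹]`-modules
`R̄ → R̄ ⊕ R̄ → R̄ → R̄ → ⋯` with `R̄` of rank `m`, the third map is zero. -/
theorem periodic_exact_sequence_over_int (m : ℕ)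
    (f₁ : (Fin m → LaurentPolynomial ℤ) →ₗ[LaurentPolynomial ℤ]
          (Fin m → LaurentPolynomial ℤ) × (Fin m → LaurentPolynomial ℤ))
    (f₂ : (Fin m → LaurentPolynomial ℤ) × (Fin m → LaurentPolynomial ℤ)
          →ₗ[LaurentPolynomial ℤ] (Fin m → LaurentPolynomial ℤ))
    (f₃ : (Fin m → LaurentPolynomial ℤ) →ₗ[LaurentPolynomial ℤ]
          (Fin m → LaurentPolynomial ℤ))
    (h12 : Function.Exact f₁ f₂)
    (h23 : Function.Exact f₂ f₃)
    (h31 : Function.Exact f₃ f₁) :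
    f₃ = 0 := by
  set A := LaurentPolynomial ℤ
  -- kernels equal ranges
  have e12 : LinearMap.ker f₂ = LinearMap.range f₁ := h12.linearMap_ker_eq
  have e23 : LinearMap.ker f₃ = LinearMap.range f₂ := h23.linearMap_ker_eq
  have e31 : LinearMap.ker f₁ = LinearMap.range f₃ := h31.linearMap_ker_eq
  -- ranks of the modules
  have hM : Module.rank A (Fin m → A) = m := rank_fin_fun m
  have hP : Module.rank A ((Fin m → A) × (Fin m → A)) = m + m := by
    rw [rank_prod', hM]
  -- rank-nullity
  have n1 := LinearMap.rank_range_add_rank_ker f₁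
  have n2 := LinearMap.rank_range_add_rank_ker f₂
  have n3 := LinearMap.rank_range_add_rank_ker f₃
  rw [e31, hM] at n1
  rw [e12, hP] at n2
  rw [e23, hM] at n3
  -- all ranks are finite
  have fin1 : Module.rank A (LinearMap.range f₁) < Cardinal.aleph0 := by
    refine lt_of_le_of_lt (Submodule.rank_le _) ?_
    rw [hP]; exact_mod_cast Cardinal.nat_lt_aleph0 (m + m)
  have fin2 : Module.rank A (LinearMap.range f₂) < Cardinal.aleph0 := by
    refine lt_of_le_of_lt (Submodule.rank_le _) ?_
    rw [hM]; exact Cardinal.nat_lt_aleph0 m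
  have fin3 : Module.rank A (LinearMap.range f₃) < Cardinal.aleph0 := by
    refine lt_of_le_of_lt (Submodule.rank_le _) ?_
    rw [hM]; exact Cardinal.nat_lt_aleph0 m
  obtain ⟨a, ha⟩ := Cardinal.lt_aleph0.mp fin1
  obtain ⟨b, hb⟩ := Cardinal.lt_aleph0.mp fin2
  obtain ⟨c, hc⟩ := Cardinal.lt_aleph0.mp fin3
  rw [ha, hc] at n1
  rw [hb, ha] at n2
  rw [hc, hb] at n3
  have hn1 : a + c = m := by exact_mod_cast n1
  have hn2 : b + a = m + m := by exact_mod_cast n2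
  have hn3 : c + b = m := by exact_mod_cast n3
  have hc0 : c = 0 := by omega
  have hr0 : Module.rank A (LinearMap.range f₃) = 0 := by rw [hc, hc0]; simp
  haveI : NoZeroSMulDivisors A (Fin m → A) := by
    constructor
    intro r x h
    by_cases hr : r = 0
    · exact Or.inl hr
    · refine Or.inr (funext fun i => ?_)
      have h' : r * x i = 0 := congrFun h i
      exact (mul_eq_zero.mp h').resolve_left hr
  have hbot : LinearMap.range f₃ = ⊥ := Submodule.rank_eq_zero.mp hr0
  exact LinearMap.range_eq_bot.mp hbot
end

section
/- Let R be a commutative ring, R̂ = Rᵐ a finitely generated free R-module, and M₁, M₂, M₃ R-modules with Hom_R(Mᵢ, R̂) = 0 for each i. Suppose given a 3-periodic exact sequence R̂ ⊕ M₁ →^{f₁} R̂ ⊕ R̂ ⊕ M₂ →^{f₂} R̂ ⊕ M₃ →^{f₃} R̂ ⊕ M₁ → ⋯ such that the composites 0 → R̂ → R̂ ⊕ R̂ → R̂ → 0 of f₁ and f₂ with the inclusions/projections of the free summands form a short exact sequence. Then f₃ maps M₃ into M₁, f₁ restricted to M₁ followed by projection to M₂, and f₂ restricted to M₂ followed by projection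 to M₃, fit into an exact 3-periodic sequence M₁ → M₂ → M₃ → M₁ → ⋯. -/
/-!
Since `Hom(Mᵢ, R̂) = 0`, the torsion-to-free blocks of the `fᵢ` vanish, so the torsion parts
compose to zero. Conversely, if the torsion part of `f (0, y)` vanishes, then `(0, y) = f (p, x)`
with `p` killed by the free block of `f`; the short exact sequence of free parts (injectivity of
`g₁`, exactness in the middle, surjectivity of `g₂`, one at each spot) shows that `f (p, 0)` is
also the image of a torsion element, so `y` comes from the torsion part.
-/

namespace LinearMap

variable {R P Q S L M N : Type*} [Semiring R]
  [AddCommGroup P] [Module R P] [AddCommGroup Q] [Module R Q] [AddCommGroup S] [Module R S]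
  [AddCommGroup L] [Module R L] [AddCommGroup M] [Module R M] [AddCommGroup N] [Module R N]

theorem forall_eq_zero_prod (hP : ∀ g : M →ₗ[R] P, g = 0) (hQ : ∀ g : M →ₗ[R] Q, g = 0) :
    ∀ g : M →ₗ[R] P × Q, g = 0 := by
  intro g
  ext x
  · exact LinearMap.congr_fun (hP (fst R P Q ∘ₗ g)) x
  · exact LinearMap.congr_fun (hQ (snd R P Q ∘ₗ g)) x

theorem fst_apply_zero_mk_eq_zero (hL : ∀ g : L →ₗ[R] Q, g = 0) (u : P × L →ₗ[R] Q × M) (x : L) :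
    (u (0, x)).1 = 0 :=
  LinearMap.congr_fun (hL (fst R Q M ∘ₗ u ∘ₗ inr R P L)) x

theorem apply_mk_eq_add (u : P × L →ₗ[R] Q × M) (p : P) (x : L) :
    u (p, x) = u (p, 0) + u (0, x) := by
  rw [← map_add, Prod.mk_add_mk, add_zero, zero_add]

theorem apply_mk_zero_eq_apply_zero_mk_neg {u : P × L →ₗ[R] Q × M} {p : P} {x : L}
    (h : u (p, x) = 0) : u (p, 0) = u (0, -x) := by
  rw [apply_mk_eq_add, add_eq_zero_iff_eq_neg] at h
  rw [h, ← map_neg, Prod.neg_mk, neg_zero]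

theorem exact_snd_apply_zero_mk {u : P × L →ₗ[R] Q × M} {v : Q × M →ₗ[R] S × N}
    (huv : Function.Exact u v) (hu : ∀ x, (u (0, x)).1 = 0) (hv : ∀ y, (v (0, y)).1 = 0)
    (hfree : ∀ p, (u (p, 0)).1 = 0 → ∃ x, u (p, 0) = u (0, x)) :
    Function.Exact (fun x => (u (0, x)).2) (fun y => (v (0, y)).2) := by
  intro y
  constructor
  · intro hy
    obtain ⟨⟨p, x⟩, hpx⟩ := (huv (0, y)).1 (Prod.ext (hv y) hy)
    rw [apply_mk_eq_add] at hpx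
    obtain ⟨x', hx'⟩ := hfree p (by simpa [hu] using congr_arg Prod.fst hpx)
    refine ⟨x' + x, ?_⟩
    have hsum : u (0, x' + x) = u (0, x') + u (0, x) := by
      rw [← map_add, Prod.mk_add_mk, add_zero]
    simp only [hsum, ← hx', hpx]
  · rintro ⟨x, rfl⟩
    have hux : u (0, x) = (0, (u (0, x)).2) := Prod.ext (hu x) rfl
    have h := huv.apply_apply_eq_zero (0, x)
    rw [hux] at h
    exact congr_arg Prod.snd h

end LinearMap

open LinearMap

/-- Lemma A.2 of the paper: in a 3-periodic exact sequence
`R̂⊕M₁ → R̂⊕R̂⊕M₂ → R̂⊕M₃ → R̂⊕M₁ → ⋯` with `Hom(Mᵢ, R̂) = 0`, if the induced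
sequence of free parts `0 → R̂ → R̂⊕R̂ → R̂ → 0` is short exact, then the maps
restrict to a 3-periodic exact sequence `M₁ → M₂ → M₃ → M₁ → ⋯`. -/
theorem torsion_parts_exact
    (R : Type*) [CommRing R] (m : ℕ)
    (M₁ M₂ M₃ : Type*)
    [AddCommGroup M₁] [Module R M₁] [AddCommGroup M₂] [Module R M₂]
    [AddCommGroup M₃] [Module R M₃]
    (hM₁ : ∀ g : M₁ →ₗ[R] (Fin m → R), g = 0)
    (hM₂ : ∀ g : M₂ →ₗ[R] (Fin m → R), g = 0)
    (hM₃ : ∀ g : M₃ →ₗ[R] (Fin m → R), g = 0)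
    (f₁ : (Fin m → R) × M₁ →ₗ[R] ((Fin m → R) × (Fin m → R)) × M₂)
    (f₂ : ((Fin m → R) × (Fin m → R)) × M₂ →ₗ[R] (Fin m → R) × M₃)
    (f₃ : (Fin m → R) × M₃ →ₗ[R] (Fin m → R) × M₁)
    (h12 : Function.Exact f₁ f₂)
    (h23 : Function.Exact f₂ f₃)
    (h31 : Function.Exact f₃ f₁)
    (g₁ : (Fin m → R) →ₗ[R] (Fin m → R) × (Fin m → R))
    (g₂ : (Fin m → R) × (Fin m → R) →ₗ[R] (Fin m → R))
    (hg₁ : g₁ = (LinearMap.fst R ((Fin m → R) × (Fin m → R)) M₂).comp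
        (f₁.comp (LinearMap.inl R (Fin m → R) M₁)))
    (hg₂ : g₂ = (LinearMap.fst R (Fin m → R) M₃).comp
        (f₂.comp (LinearMap.inl R ((Fin m → R) × (Fin m → R)) M₂)))
    (hg₁inj : Function.Injective g₁)
    (hgexact : Function.Exact g₁ g₂)
    (hg₂surj : Function.Surjective g₂) :
    (∀ z : M₃, (f₃ (0, z)).1 = 0) ∧
    Function.Exact (fun x : M₁ => (f₁ (0, x)).2) (fun y : M₂ => (f₂ ((0, 0), y)).2) ∧
    Function.Exact (fun y : M₂ => (f₂ ((0, 0), y)).2) (fun z : M₃ => (f₃ (0, z)).2) ∧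
    Function.Exact (fun z : M₃ => (f₃ (0, z)).2) (fun x : M₁ => (f₁ (0, x)).2) := by
  have hf₁ := fst_apply_zero_mk_eq_zero (forall_eq_zero_prod hM₁ hM₁) f₁
  have hf₂ := fst_apply_zero_mk_eq_zero hM₂ f₂
  have hf₃ := fst_apply_zero_mk_eq_zero hM₃ f₃
  have hg₁_apply : ∀ a, (f₁ (a, 0)).1 = g₁ a := by subst hg₁; exact fun _ => rfl
  have hg₂_apply : ∀ p, (f₂ (p, 0)).1 = g₂ p := by subst hg₂; exact fun _ => rfl
  refine ⟨hf₃, exact_snd_apply_zero_mk h12 hf₁ hf₂ ?_, exact_snd_apply_zero_mk h23 hf₂ hf₃ ?_,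
    exact_snd_apply_zero_mk h31 hf₃ hf₁ ?_⟩
  · intro a ha
    rw [hg₁_apply, ← map_zero g₁] at ha
    exact ⟨0, by rw [hg₁inj ha]⟩
  · intro p hp
    obtain ⟨c, rfl⟩ := (hgexact p).1 (by rwa [← hg₂_apply])
    rw [← hg₁_apply]
    exact ⟨_, apply_mk_zero_eq_apply_zero_mk_neg (h12.apply_apply_eq_zero (c, 0))⟩
  · intro c _
    obtain ⟨q, rfl⟩ := hg₂surj c
    rw [← hg₂_apply]
    exact ⟨_, apply_mk_zero_eq_apply_zero_mk_neg (h23.apply_apply_eq_zero (q, 0))⟩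
end
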